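/- arXiv:2010.03218 — 5 statements merged into one kernel-verified Lean document; each statement's English description precedes it below -/
import Mathlib

section
/- Let F : ℝ^N × ℝ^d → ℝ^N be continuous, D_N ⊆ ℝ^N closed, D_d ⊆ ℝ^d compact, with F(D_N × D_d) ⊆ D_N, and suppose there exists 0 < c < 1 such that ‖F(x₁,z) − F(x₂,z)‖ ≤ c‖x₁ − x₂‖ for all x₁,x₂ ∈ D_N and z ∈ D_d. Then there exists a compact subset W ⊆ D_N such that F(W × D_d) ⊆ W. -/
/-!
Fix a base point `p ∈ D_N` and bound `‖F(p, z) - p‖ ≤ M` over the compact input set. For `x`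
within `R = M / (1 - c)` of `p`, the triangle inequality through `F(p, z)` gives
`‖F(x, z) - p‖ ≤ c R + M = R`, so `W = D_N ∩ closedBall p R` is invariant; it is compact as a
closed and bounded subset of a finite-dimensional space.
-/

open Metric Set

section

variable {X Z : Type*} [PseudoMetricSpace X]

theorem mem_closedBall_div_one_sub_of_contraction {f : X → X} {p x : X} {c M : ℝ}
    (hc0 : 0 ≤ c) (hc1 : c < 1) (hfx : dist (f x) (f p) ≤ c * dist x p)
    (hfp : dist (f p) p ≤ M) (hx : x ∈ closedBall p (M / (1 - c))) :
    f x ∈ closedBall p (M / (1 - c)) := by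
  rw [mem_closedBall] at hx ⊢
  have h1c : 0 < 1 - c := sub_pos.mpr hc1
  calc dist (f x) p ≤ dist (f x) (f p) + dist (f p) p := dist_triangle _ _ _
    _ ≤ c * (M / (1 - c)) + M := add_le_add (hfx.trans (by gcongr)) hfp
    _ = M / (1 - c) := by field_simp; ring

theorem exists_isCompact_subset_forall_mapsTo_of_contraction [ProperSpace X]
    [TopologicalSpace Z] {F : X → Z → X} {D : Set X} {K : Set Z} {c : ℝ}
    (hF : ∀ x ∈ D, ContinuousOn (F x) K) (hD : IsClosed D) (hK : IsCompact K)
    (hinv : ∀ x ∈ D, ∀ z ∈ K, F x z ∈ D) (hc0 : 0 ≤ c) (hc1 : c < 1)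
    (hcontr : ∀ x₁ ∈ D, ∀ x₂ ∈ D, ∀ z ∈ K, dist (F x₁ z) (F x₂ z) ≤ c * dist x₁ x₂) :
    ∃ W ⊆ D, IsCompact W ∧ ∀ x ∈ W, ∀ z ∈ K, F x z ∈ W := by
  rcases D.eq_empty_or_nonempty with rfl | ⟨p, hp⟩
  · exact ⟨∅, empty_subset _, isCompact_empty, by simp⟩
  obtain ⟨M, hM⟩ : BddAbove ((fun z => dist (F p z) p) '' K) :=
    hK.bddAbove_image (continuous_dist.comp_continuousOn ((hF p hp).prodMk continuousOn_const))
  refine ⟨D ∩ closedBall p (M / (1 - c)), inter_subset_left,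
    (isCompact_closedBall _ _).inter_left hD, ?_⟩
  rintro x ⟨hxD, hxB⟩ z hz
  exact ⟨hinv x hxD z hz, mem_closedBall_div_one_sub_of_contraction (f := (F · z)) hc0 hc1
    (hcontr x hxD p hp z hz) (hM (mem_image_of_mem _ hz)) hxB⟩

end

/-- A continuous state map `F` on a closed state set `D_N` with compact
input set `D_d`, leaving `D_N` invariant and uniformly contracting in the state
variable, admits a compact invariant subset `W ⊆ D_N`. -/
theorem stmt0 {N d : ℕ}
    (F : EuclideanSpace ℝ (Fin N) → EuclideanSpace ℝ (Fin d) → EuclideanSpace ℝ (Fin N))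
    (DN : Set (EuclideanSpace ℝ (Fin N))) (Dd : Set (EuclideanSpace ℝ (Fin d)))
    (hF : Continuous fun p : EuclideanSpace ℝ (Fin N) × EuclideanSpace ℝ (Fin d) => F p.1 p.2)
    (hDN : IsClosed DN) (hDd : IsCompact Dd)
    (hinv : ∀ x ∈ DN, ∀ z ∈ Dd, F x z ∈ DN)
    (c : ℝ) (hc0 : 0 < c) (hc1 : c < 1)
    (hcontr : ∀ x₁ ∈ DN, ∀ x₂ ∈ DN, ∀ z ∈ Dd, ‖F x₁ z - F x₂ z‖ ≤ c * ‖x₁ - x₂‖) :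
    ∃ W ⊆ DN, IsCompact W ∧ ∀ x ∈ W, ∀ z ∈ Dd, F x z ∈ W :=
  exists_isCompact_subset_forall_mapsTo_of_contraction
    (fun x _ => (hF.comp (Continuous.prodMk_right x)).continuousOn) hDN hDd hinv hc0.le hc1
    (by simpa only [dist_eq_norm] using hcontr)
end

section
/- Let M be a compact Riemannian manifold, φ ∈ Diff¹(M), ω ∈ C¹(M, ℝ^d), F ∈ C¹(D_N × D_d, D_N) with D_N ⊆ ℝ^N, D_d ⊆ ℝ^d open, ω(M) ⊆ D_d, W ⊆ D_N with F(W × ω(M)) ⊆ W. Set L_{F_x} := sup over W × ω(M) of ‖D_x F‖ and L_{F_z} := sup over W × ω(M) of ‖D_z F‖, and assume both are finite and L_{F_x}‖Tφ^{−1}‖_∞ < 1. Then for any R > L_{F_z}‖Dω‖_∞ / (1 − L_{F_x}‖Tφ^{−1}‖_∞), the map Ψ(f)(m) := F(f(φ^{−1}(m)), ω(m)) maps Ω(R, W) := {f ∈ C¹(M, W) : ‖Df‖_∞ ≤ R} into itself. -/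
/-!
By the chain rule, `D(Ψ f)_m = ∂ₓF ∘ Df_{φ⁻¹ m} ∘ T_mφ⁻¹ + ∂_zF ∘ Dω_m`, so
`‖D(Ψ f)‖ ≤ L_{F_x} R ‖Tφ⁻¹‖_∞ + L_{F_z} ‖Dω‖_∞`, and the lower bound on `R` is exactly what makes
the right-hand side at most `R`. Invariance of `W` and `C¹` regularity of `Ψ f` are immediate.
-/

open Manifold ContinuousLinearMap

section

variable {𝕜 : Type*} [NontriviallyNormedField 𝕜]
  {E : Type*} [NormedAddCommGroup E] [NormedSpace 𝕜 E]
  {E₁ : Type*} [NormedAddCommGroup E₁] [NormedSpace 𝕜 E₁]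
  {E₂ : Type*} [NormedAddCommGroup E₂] [NormedSpace 𝕜 E₂]
  {G : Type*} [NormedAddCommGroup G] [NormedSpace 𝕜 G]

theorem norm_comp_prod_le (L : E₁ × E₂ →L[𝕜] G) (P : E →L[𝕜] E₁) (Q : E →L[𝕜] E₂) :
    ‖L ∘L P.prod Q‖ ≤ ‖L ∘L inl 𝕜 E₁ E₂‖ * ‖P‖ + ‖L ∘L inr 𝕜 E₁ E₂‖ * ‖Q‖ := by
  have hsplit : L ∘L P.prod Q = (L ∘L inl 𝕜 E₁ E₂) ∘L P + (L ∘L inr 𝕜 E₁ E₂) ∘L Q := by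
    ext v
    simp [← map_add]
  rw [hsplit]
  exact (norm_add_le _ _).trans (add_le_add (opNorm_comp_le _ _) (opNorm_comp_le _ _))

variable {F : E₁ → E₂ → G} {a : E₁} {b : E₂}

theorem DifferentiableAt.fderiv_left_eq_comp_inl
    (hF : DifferentiableAt 𝕜 (fun p : E₁ × E₂ => F p.1 p.2) (a, b)) :
    fderiv 𝕜 (fun x => F x b) a = fderiv 𝕜 (fun p : E₁ × E₂ => F p.1 p.2) (a, b) ∘L inl 𝕜 E₁ E₂ := by
  exact (hF.hasFDerivAt.comp a (hasFDerivAt_prodMk_left (𝕜 := 𝕜) a b)).fderiv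

theorem DifferentiableAt.fderiv_right_eq_comp_inr
    (hF : DifferentiableAt 𝕜 (fun p : E₁ × E₂ => F p.1 p.2) (a, b)) :
    fderiv 𝕜 (fun z => F a z) b = fderiv 𝕜 (fun p : E₁ × E₂ => F p.1 p.2) (a, b) ∘L inr 𝕜 E₁ E₂ :=
  (hF.hasFDerivAt.comp b (hasFDerivAt_prodMk_right a b)).fderiv

variable {H : Type*} [TopologicalSpace H] {I : ModelWithCorners 𝕜 E H}
  {M : Type*} [TopologicalSpace M] [ChartedSpace H M]

theorem HasMFDerivAt.prodMk_space {g : M → E₁} {h : M → E₂} {x : M}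
    {g' : TangentSpace I x →L[𝕜] E₁} {h' : TangentSpace I x →L[𝕜] E₂}
    (hg : HasMFDerivAt I 𝓘(𝕜, E₁) g x g') (hh : HasMFDerivAt I 𝓘(𝕜, E₂) h x h') :
    HasMFDerivAt I 𝓘(𝕜, E₁ × E₂) (fun y => (g y, h y)) x (g'.prod h') :=
  ⟨hg.1.prodMk hh.1, hg.2.prodMk hh.2⟩

theorem norm_mfderiv_apply_prodMk_le {g : M → E₁} {h : M → E₂} {x : M}
    (hg : MDifferentiableAt I 𝓘(𝕜, E₁) g x) (hh : MDifferentiableAt I 𝓘(𝕜, E₂) h x)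
    (hF : DifferentiableAt 𝕜 (fun p : E₁ × E₂ => F p.1 p.2) (g x, h x)) :
    @Norm.norm (E →L[𝕜] G) _ (mfderiv I 𝓘(𝕜, G) (fun y => F (g y) (h y)) x) ≤
      ‖fderiv 𝕜 (fun y => F y (h x)) (g x)‖ * @Norm.norm (E →L[𝕜] E₁) _ (mfderiv I 𝓘(𝕜, E₁) g x) +
      ‖fderiv 𝕜 (fun z => F (g x) z) (h x)‖ * @Norm.norm (E →L[𝕜] E₂) _ (mfderiv I 𝓘(𝕜, E₂) h x) := by
  have hd := hF.hasFDerivAt.hasMFDerivAt.comp x (hg.hasMFDerivAt.prodMk_space hh.hasMFDerivAt)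
  rw [show (fun y => F (g y) (h y)) = (fun p : E₁ × E₂ => F p.1 p.2) ∘ fun y => (g y, h y) from rfl,
    hd.mfderiv, hF.fderiv_left_eq_comp_inl, hF.fderiv_right_eq_comp_inr]
  exact norm_comp_prod_le (E := E) (E₁ := E₁) (E₂ := E₂) (G := G) _ _ _

theorem norm_mfderiv_comp_le {g : M → E₁} {ψ : M → M} {x : M}
    (hg : MDifferentiableAt I 𝓘(𝕜, E₁) g (ψ x)) (hψ : MDifferentiableAt I I ψ x) :
    @Norm.norm (E →L[𝕜] E₁) _ (mfderiv I 𝓘(𝕜, E₁) (g ∘ ψ) x) ≤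
      @Norm.norm (E →L[𝕜] E₁) _ (mfderiv I 𝓘(𝕜, E₁) g (ψ x)) *
        @Norm.norm (E →L[𝕜] E) _ (mfderiv I I ψ x) := by
  rw [mfderiv_comp x hg hψ]
  exact opNorm_comp_le (E := E) (F := E) (G := E₁) _ _

end

theorem mul_mul_add_le_of_div_one_sub_lt {a t c R : ℝ} (hat : a * t < 1)
    (hR : c / (1 - a * t) < R) : a * (R * t) + c ≤ R := by
  have := (div_lt_iff₀ (sub_pos.mpr hat)).mp hR
  linarith

theorem stmt12_general {q N d : ℕ} {M : Type*} [TopologicalSpace M]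
    [ChartedSpace (EuclideanSpace ℝ (Fin q)) M]
    (φ : M ≃ₜ M)
    (hφinv : ContMDiff (𝓡 q) (𝓡 q) 1 φ.symm)
    (ω : M → EuclideanSpace ℝ (Fin d))
    (hω : ContMDiff (𝓡 q) (𝓘(ℝ, EuclideanSpace ℝ (Fin d))) 1 ω)
    (DN : Set (EuclideanSpace ℝ (Fin N))) (Dd : Set (EuclideanSpace ℝ (Fin d)))
    (hDN : IsOpen DN) (hDd : IsOpen Dd)
    (F : EuclideanSpace ℝ (Fin N) → EuclideanSpace ℝ (Fin d) → EuclideanSpace ℝ (Fin N))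
    (hF : ContDiffOn ℝ 1
      (fun p : EuclideanSpace ℝ (Fin N) × EuclideanSpace ℝ (Fin d) => F p.1 p.2) (DN ×ˢ Dd))
    (W : Set (EuclideanSpace ℝ (Fin N))) (hWDN : W ⊆ DN) (hωDd : ∀ m, ω m ∈ Dd)
    (hinv : ∀ x ∈ W, ∀ m : M, F x (ω m) ∈ W)
    (LFx LFz nTφinv nDω R : ℝ)
    (hLFx : ∀ x ∈ W, ∀ m : M, ‖fderiv ℝ (fun x' => F x' (ω m)) x‖ ≤ LFx)
    (hLFz : ∀ x ∈ W, ∀ m : M, ‖fderiv ℝ (fun z' => F x z') (ω m)‖ ≤ LFz)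
    (hnTφinv : ∀ m : M, @Norm.norm (EuclideanSpace ℝ (Fin q) →L[ℝ] EuclideanSpace ℝ (Fin q)) _
      (mfderiv (𝓡 q) (𝓡 q) φ.symm m) ≤ nTφinv)
    (hnDω : ∀ m : M, @Norm.norm (EuclideanSpace ℝ (Fin q) →L[ℝ] EuclideanSpace ℝ (Fin d)) _
      (mfderiv (𝓡 q) (𝓘(ℝ, EuclideanSpace ℝ (Fin d))) ω m) ≤ nDω)
    (hsmall : LFx * nTφinv < 1)
    (hR : LFz * nDω / (1 - LFx * nTφinv) < R)
    (f : M → EuclideanSpace ℝ (Fin N))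
    (hf : ContMDiff (𝓡 q) (𝓘(ℝ, EuclideanSpace ℝ (Fin N))) 1 f)
    (hfW : ∀ m, f m ∈ W)
    (hfD : ∀ m, @Norm.norm (EuclideanSpace ℝ (Fin q) →L[ℝ] EuclideanSpace ℝ (Fin N)) _
      (mfderiv (𝓡 q) (𝓘(ℝ, EuclideanSpace ℝ (Fin N))) f m) ≤ R) :
    ContMDiff (𝓡 q) (𝓘(ℝ, EuclideanSpace ℝ (Fin N))) 1 (fun m => F (f (φ.symm m)) (ω m)) ∧
    (∀ m, F (f (φ.symm m)) (ω m) ∈ W) ∧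
    ∀ m, @Norm.norm (EuclideanSpace ℝ (Fin q) →L[ℝ] EuclideanSpace ℝ (Fin N)) _
      (mfderiv (𝓡 q) (𝓘(ℝ, EuclideanSpace ℝ (Fin N)))
      (fun m' => F (f (φ.symm m')) (ω m')) m) ≤ R := by
  have hmem : ∀ m, (f (φ.symm m), ω m) ∈ DN ×ˢ Dd := fun m => ⟨hWDN (hfW _), hωDd m⟩
  refine ⟨hF.contMDiffOn.comp_contMDiff ((hf.comp hφinv).prodMk_space hω) hmem,
    fun m => hinv _ (hfW _) m, fun m => ?_⟩
  have hFm : DifferentiableAt ℝ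
      (fun p : EuclideanSpace ℝ (Fin N) × EuclideanSpace ℝ (Fin d) => F p.1 p.2)
      (f (φ.symm m), ω m) :=
    (hF.differentiableOn one_ne_zero).differentiableAt ((hDN.prod hDd).mem_nhds (hmem m))
  have hfφ : MDifferentiableAt (𝓡 q) 𝓘(ℝ, EuclideanSpace ℝ (Fin N)) (f ∘ φ.symm) m :=
    ((hf.comp hφinv) m).mdifferentiableAt one_ne_zero
  have hDfφ : @Norm.norm (EuclideanSpace ℝ (Fin q) →L[ℝ] EuclideanSpace ℝ (Fin N)) _
      (mfderiv (𝓡 q) 𝓘(ℝ, EuclideanSpace ℝ (Fin N)) (f ∘ φ.symm) m) ≤ R * nTφinv := by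
    refine (norm_mfderiv_comp_le ((hf _).mdifferentiableAt one_ne_zero)
      ((hφinv m).mdifferentiableAt one_ne_zero)).trans ?_
    exact mul_le_mul (hfD _) (hnTφinv m) (norm_nonneg _) ((norm_nonneg _).trans (hfD m))
  have hFx := hLFx _ (hfW (φ.symm m)) m
  have hFz := hLFz _ (hfW (φ.symm m)) m
  refine (norm_mfderiv_apply_prodMk_le hfφ ((hω m).mdifferentiableAt one_ne_zero) hFm).trans ?_
  refine le_trans ?_ (mul_mul_add_le_of_div_one_sub_lt hsmall hR)
  exact add_le_add (mul_le_mul hFx hDfφ (norm_nonneg _) ((norm_nonneg _).trans hFx))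
    (mul_le_mul hFz (hnDω m) (norm_nonneg _) ((norm_nonneg _).trans hFz))

/-- under the curvature-free bounds `L_{F_x}‖Tφ⁻¹‖_∞ < 1` and
`R > L_{F_z}‖Dω‖_∞ / (1 − L_{F_x}‖Tφ⁻¹‖_∞)`, the map
`Ψ(f)(m) := F (f (φ⁻¹ m)) (ω m)` maps `Ω(R,W)` into itself. -/
theorem stmt12 {q N d : ℕ} {M : Type*} [TopologicalSpace M]
    [ChartedSpace (EuclideanSpace ℝ (Fin q)) M] [IsManifold (𝓡 q) (⊤ : ℕ∞) M]
    [CompactSpace M]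
    (φ : M ≃ₜ M) (hφ : ContMDiff (𝓡 q) (𝓡 q) 1 φ)
    (hφinv : ContMDiff (𝓡 q) (𝓡 q) 1 φ.symm)
    (ω : M → EuclideanSpace ℝ (Fin d))
    (hω : ContMDiff (𝓡 q) (𝓘(ℝ, EuclideanSpace ℝ (Fin d))) 1 ω)
    (DN : Set (EuclideanSpace ℝ (Fin N))) (Dd : Set (EuclideanSpace ℝ (Fin d)))
    (hDN : IsOpen DN) (hDd : IsOpen Dd)
    (F : EuclideanSpace ℝ (Fin N) → EuclideanSpace ℝ (Fin d) → EuclideanSpace ℝ (Fin N))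
    (hF : ContDiffOn ℝ 1
      (fun p : EuclideanSpace ℝ (Fin N) × EuclideanSpace ℝ (Fin d) => F p.1 p.2) (DN ×ˢ Dd))
    (W : Set (EuclideanSpace ℝ (Fin N))) (hWDN : W ⊆ DN) (hωDd : ∀ m, ω m ∈ Dd)
    (hinv : ∀ x ∈ W, ∀ m : M, F x (ω m) ∈ W)
    (LFx LFz nTφinv nDω R : ℝ)
    (hLFx : ∀ x ∈ W, ∀ m : M, ‖fderiv ℝ (fun x' => F x' (ω m)) x‖ ≤ LFx)
    (hLFz : ∀ x ∈ W, ∀ m : M, ‖fderiv ℝ (fun z' => F x z') (ω m)‖ ≤ LFz)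
    (hnTφinv : ∀ m : M, @Norm.norm (EuclideanSpace ℝ (Fin q) →L[ℝ] EuclideanSpace ℝ (Fin q)) _
      (mfderiv (𝓡 q) (𝓡 q) φ.symm m) ≤ nTφinv)
    (hnDω : ∀ m : M, @Norm.norm (EuclideanSpace ℝ (Fin q) →L[ℝ] EuclideanSpace ℝ (Fin d)) _
      (mfderiv (𝓡 q) (𝓘(ℝ, EuclideanSpace ℝ (Fin d))) ω m) ≤ nDω)
    (hsmall : LFx * nTφinv < 1)
    (hR : LFz * nDω / (1 - LFx * nTφinv) < R)
    (f : M → EuclideanSpace ℝ (Fin N))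
    (hf : ContMDiff (𝓡 q) (𝓘(ℝ, EuclideanSpace ℝ (Fin N))) 1 f)
    (hfW : ∀ m, f m ∈ W)
    (hfD : ∀ m, @Norm.norm (EuclideanSpace ℝ (Fin q) →L[ℝ] EuclideanSpace ℝ (Fin N)) _
      (mfderiv (𝓡 q) (𝓘(ℝ, EuclideanSpace ℝ (Fin N))) f m) ≤ R) :
    ContMDiff (𝓡 q) (𝓘(ℝ, EuclideanSpace ℝ (Fin N))) 1 (fun m => F (f (φ.symm m)) (ω m)) ∧
    (∀ m, F (f (φ.symm m)) (ω m) ∈ W) ∧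
    ∀ m, @Norm.norm (EuclideanSpace ℝ (Fin q) →L[ℝ] EuclideanSpace ℝ (Fin N)) _
      (mfderiv (𝓡 q) (𝓘(ℝ, EuclideanSpace ℝ (Fin N)))
      (fun m' => F (f (φ.symm m')) (ω m')) m) ≤ R :=
  stmt12_general φ hφinv ω hω DN Dd hDN hDd F hF W hWDN hωDd hinv LFx LFz nTφinv nDω R hLFx hLFz
    hnTφinv hnDω hsmall hR f hf hfW hfD
end

section
/- In the setting of the differentiable synchronization theorem, for any f₁, f₂ ∈ Ω(R, W) and any δ > 0, the map Ψ(f)(m) := F(f(φ^{−1}(m)), ω(m)) satisfies ‖Ψ(f₁) − Ψ(f₂)‖_{C¹(δ)} ≤ (L_{F_x} + δ(L_{F_{xx}}‖Tφ^{−1}‖_∞ R + L_{F_{xz}}‖Dω‖_∞)) ‖f₁ − f₂‖_∞ + δ L_{F_x}‖Tφ^{−1}‖_∞ ‖Df₁ − Df₂‖_∞. In particular, if L_{F_x} < min{1, 1/‖Tφ^{−1}‖_∞}, then for δ₀ > 0 sufficiently small Ψ is a contraction of Ω(R, W) with respect to ‖·‖_{C¹(δ₀)}. -/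
/-!
Write `Ψ f m = F (f (φ⁻¹ m)) (ω m)`. The `C⁰` part of the estimate is the mean value inequality
for `x ↦ F x (ω m)` on the convex set `W`. For the `C¹` part, the chain rule gives
`D(Ψ f) = ∂ₓF ∘ Df ∘ Tφ⁻¹ + ∂_zF ∘ Dω`. Inserting `∂ₓF(x₁) ∘ Df₂ ∘ Tφ⁻¹` splits `D(Ψ f₁) - D(Ψ f₂)`
into three terms, bounded by `L_{F_x}`, by the mean value inequality for `∂ₓF`, and by the mean
value inequality for `x ↦ ∂_zF(x, z)`. The derivative of the last map is the mixed second
derivative of `F`, which is symmetric because `F` is `C²`. Taking suprema over the compact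
manifold gives the `C¹(δ)` estimate. Since `L_{F_x} < 1` and `L_{F_x} ‖Tφ⁻¹‖ < 1`, both
coefficients drop below `1` once `δ` is small.
-/

open Set ContinuousLinearMap Filter Function Topology Manifold

theorem ContinuousLinearMap.comp_prod_eq_add {R X Y Z K : Type*} [Semiring R]
    [AddCommMonoid X] [Module R X] [TopologicalSpace X] [AddCommMonoid Y] [Module R Y]
    [TopologicalSpace Y] [AddCommMonoid Z] [Module R Z] [TopologicalSpace Z]
    [AddCommMonoid K] [Module R K] [TopologicalSpace K] [ContinuousAdd K]
    (T : Y × Z →L[R] K) (A : X →L[R] Y) (B : X →L[R] Z) :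
    T.comp (A.prod B) = (T.comp (inl R Y Z)).comp A + (T.comp (inr R Y Z)).comp B := by
  ext v
  simp [← map_add]

theorem ContinuousLinearMap.norm_comp_add_comp_sub_le {X V Y Z K : Type*}
    [NormedAddCommGroup X] [NormedSpace ℝ X] [NormedAddCommGroup V] [NormedSpace ℝ V]
    [NormedAddCommGroup Y] [NormedSpace ℝ Y] [NormedAddCommGroup Z] [NormedSpace ℝ Z]
    [NormedAddCommGroup K] [NormedSpace ℝ K] (A₁ A₂ : Y →L[ℝ] K) (B₁ B₂ : Z →L[ℝ] K)
    (D₁ D₂ : V →L[ℝ] Y) (C : X →L[ℝ] V) (Q : X →L[ℝ] Z) :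
    ‖(A₁.comp (D₁.comp C) + B₁.comp Q) - (A₂.comp (D₂.comp C) + B₂.comp Q)‖ ≤
      ‖A₁‖ * ‖D₁ - D₂‖ * ‖C‖ + ‖A₁ - A₂‖ * ‖D₂‖ * ‖C‖ + ‖B₁ - B₂‖ * ‖Q‖ := by
  have : (A₁.comp (D₁.comp C) + B₁.comp Q) - (A₂.comp (D₂.comp C) + B₂.comp Q) =
      A₁.comp ((D₁ - D₂).comp C) + (A₁ - A₂).comp (D₂.comp C) + (B₁ - B₂).comp Q := by
    ext
    simp only [add_apply, sub_apply, coe_comp, Function.comp_apply, map_sub]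
    abel
  rw [this]
  refine norm_add₃_le.trans (add_le_add_three ?_ ?_ (opNorm_comp_le _ _))
  all_goals
    refine (opNorm_comp_le _ _).trans ?_
    rw [mul_assoc]
    gcongr
    exact opNorm_comp_le _ _

theorem ContDiffAt.eventually_differentiableAt {𝕜 X Y : Type*} [NontriviallyNormedField 𝕜]
    [NormedAddCommGroup X] [NormedSpace 𝕜 X] [NormedAddCommGroup Y] [NormedSpace 𝕜 Y]
    {f : X → Y} {x : X} {n : WithTop ℕ∞} (hf : ContDiffAt 𝕜 n f x) (hn : 1 ≤ n) :
    ∀ᶠ y in 𝓝 x, DifferentiableAt 𝕜 f y :=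
  ((hf.of_le hn).eventually (by simp)).mono fun _ hy => hy.differentiableAt one_ne_zero

section

variable {E G H : Type*} [NormedAddCommGroup E] [NormedSpace ℝ E]
  [NormedAddCommGroup G] [NormedSpace ℝ G] [NormedAddCommGroup H] [NormedSpace ℝ H]

section Partials

variable {F : E → G → H} {x : E} {z : G}

theorem fderiv_partial_fst (hF : DifferentiableAt ℝ (uncurry F) (x, z)) :
    fderiv ℝ (fun x' => F x' z) x = (fderiv ℝ (uncurry F) (x, z)).comp (inl ℝ E G) :=
  (hF.hasFDerivAt.comp (f := fun x' => (x', z)) x (hasFDerivAt_prodMk_left x z)).fderiv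

theorem fderiv_partial_snd (hF : DifferentiableAt ℝ (uncurry F) (x, z)) :
    fderiv ℝ (F x) z = (fderiv ℝ (uncurry F) (x, z)).comp (inr ℝ E G) :=
  (hF.hasFDerivAt.comp (f := fun z' => (x, z')) z (hasFDerivAt_prodMk_right x z)).fderiv

theorem fderiv_fderiv_partial_snd_apply (hF : ContDiffAt ℝ 2 (uncurry F) (x, z)) (u : E)
    (v : G) :
    fderiv ℝ (fun x' => fderiv ℝ (F x') z) x u v =
      fderiv ℝ (fderiv ℝ (uncurry F)) (x, z) (u, 0) (0, v) := by
  have hev : (fun x' => fderiv ℝ (F x') z) =ᶠ[𝓝 x]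
      fun x' => (fderiv ℝ (uncurry F) (x', z)).comp (inr ℝ E G) := by
    filter_upwards [(continuous_id.prodMk continuous_const).continuousAt.eventually
      (hF.eventually_differentiableAt one_le_two)] with x' hx' using fderiv_partial_snd hx'
  have hD : HasFDerivAt (fun x' => fderiv ℝ (uncurry F) (x', z))
      ((fderiv ℝ (fderiv ℝ (uncurry F)) (x, z)).comp (inl ℝ E G)) x :=
    ((hF.fderiv_right (m := 1) (by norm_num)).differentiableAt (by simp)).hasFDerivAt.comp x
      (hasFDerivAt_prodMk_left x z)
  rw [hev.fderiv_eq, (hD.clm_comp (hasFDerivAt_const (inr ℝ E G) x)).fderiv]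
  simp

theorem fderiv_fderiv_partial_fst_apply (hF : ContDiffAt ℝ 2 (uncurry F) (x, z)) (u : E)
    (v : G) :
    fderiv ℝ (fun z' => fderiv ℝ (fun x' => F x' z') x) z v u =
      fderiv ℝ (fderiv ℝ (uncurry F)) (x, z) (0, v) (u, 0) := by
  have hev : (fun z' => fderiv ℝ (fun x' => F x' z') x) =ᶠ[𝓝 z]
      fun z' => (fderiv ℝ (uncurry F) (x, z')).comp (inl ℝ E G) := by
    filter_upwards [(continuous_const.prodMk continuous_id).continuousAt.eventually
      (hF.eventually_differentiableAt one_le_two)] with z' hz' using fderiv_partial_fst hz'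
  have hD : HasFDerivAt (fun z' => fderiv ℝ (uncurry F) (x, z'))
      ((fderiv ℝ (fderiv ℝ (uncurry F)) (x, z)).comp (inr ℝ E G)) z :=
    ((hF.fderiv_right (m := 1) (by norm_num)).differentiableAt (by simp)).hasFDerivAt.comp z
      (hasFDerivAt_prodMk_right x z)
  rw [hev.fderiv_eq, (hD.clm_comp (hasFDerivAt_const (inl ℝ E G) z)).fderiv]
  simp

theorem fderiv_fderiv_partial_comm (hF : ContDiffAt ℝ 2 (uncurry F) (x, z)) :
    fderiv ℝ (fun x' => fderiv ℝ (F x') z) x =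
      (fderiv ℝ (fun z' => fderiv ℝ (fun x' => F x' z') x) z).flip := by
  ext u v
  rw [flip_apply, fderiv_fderiv_partial_snd_apply hF, fderiv_fderiv_partial_fst_apply hF]
  exact hF.isSymmSndFDerivAt (by simp) _ _

variable {W : Set E} {L : ℝ} {x₁ x₂ : E}

theorem Convex.norm_sub_le_of_norm_partial_fst_le (hW : Convex ℝ W)
    (hF : ∀ x ∈ W, DifferentiableAt ℝ (uncurry F) (x, z))
    (hL : ∀ x ∈ W, ‖fderiv ℝ (fun x' => F x' z) x‖ ≤ L) (hx₁ : x₁ ∈ W) (hx₂ : x₂ ∈ W) :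
    ‖F x₁ z - F x₂ z‖ ≤ L * ‖x₁ - x₂‖ :=
  hW.norm_image_sub_le_of_norm_fderiv_le
    (fun x hx => (hF x hx).comp (f := fun x' => (x', z)) x
      (differentiableAt_id.prodMk (differentiableAt_const z))) hL hx₂ hx₁

theorem Convex.norm_partial_fst_sub_le (hW : Convex ℝ W)
    (hF : ∀ x ∈ W, ContDiffAt ℝ 2 (uncurry F) (x, z))
    (hL : ∀ x ∈ W, ‖fderiv ℝ (fun x' => fderiv ℝ (fun x'' => F x'' z) x') x‖ ≤ L)
    (hx₁ : x₁ ∈ W) (hx₂ : x₂ ∈ W) :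
    ‖fderiv ℝ (fun x => F x z) x₁ - fderiv ℝ (fun x => F x z) x₂‖ ≤ L * ‖x₁ - x₂‖ := by
  refine hW.norm_image_sub_le_of_norm_fderiv_le (fun x hx => ?_) hL hx₂ hx₁
  have : ContDiffAt ℝ 2 (fun x' => F x' z) x :=
    (hF x hx).comp (f := fun x' => (x', z)) x (contDiffAt_id.prodMk contDiffAt_const)
  exact (this.fderiv_right (m := 1) (by norm_num)).differentiableAt (by simp)

theorem Convex.norm_partial_snd_sub_le (hW : Convex ℝ W)
    (hF : ∀ x ∈ W, ContDiffAt ℝ 2 (uncurry F) (x, z))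
    (hL : ∀ x ∈ W, ‖fderiv ℝ (fun z' => fderiv ℝ (fun x' => F x' z') x) z‖ ≤ L)
    (hx₁ : x₁ ∈ W) (hx₂ : x₂ ∈ W) :
    ‖fderiv ℝ (F x₁) z - fderiv ℝ (F x₂) z‖ ≤ L * ‖x₁ - x₂‖ := by
  refine hW.norm_image_sub_le_of_norm_fderiv_le (𝕜 := ℝ) (f := fun x => fderiv ℝ (F x) z)
    (fun x hx => ?_) (fun x hx => ?_) hx₂ hx₁
  · exact (ContDiffAt.fderiv (𝕜 := ℝ) (g := fun _ => z) (hF x hx) contDiffAt_const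
      (m := 1) (by norm_num)).differentiableAt (by simp)
  · rw [fderiv_fderiv_partial_comm (hF x hx), opNorm_flip]
    exact hL x hx

theorem Convex.norm_partials_comp_sub_le {X V : Type*} [NormedAddCommGroup X]
    [NormedSpace ℝ X] [NormedAddCommGroup V] [NormedSpace ℝ V] (hW : Convex ℝ W)
    (hF : ∀ x ∈ W, ContDiffAt ℝ 2 (uncurry F) (x, z)) (hx₁ : x₁ ∈ W) (hx₂ : x₂ ∈ W)
    {LFx LFxx LFxz c R cω S T : ℝ} (hLFx : ‖fderiv ℝ (fun x => F x z) x₁‖ ≤ LFx)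
    (hLFxx : ∀ x ∈ W, ‖fderiv ℝ (fun x' => fderiv ℝ (fun x'' => F x'' z) x') x‖ ≤ LFxx)
    (hLFxz : ∀ x ∈ W, ‖fderiv ℝ (fun z' => fderiv ℝ (fun x' => F x' z') x) z‖ ≤ LFxz)
    {D₁ D₂ : V →L[ℝ] E} {C : X →L[ℝ] V} {Q : X →L[ℝ] G}
    (hC : ‖C‖ ≤ c) (hD₂ : ‖D₂‖ ≤ R) (hQ : ‖Q‖ ≤ cω) (hS : ‖x₁ - x₂‖ ≤ S) (hT : ‖D₁ - D₂‖ ≤ T) :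
    ‖((fderiv ℝ (fun x => F x z) x₁).comp (D₁.comp C) + (fderiv ℝ (F x₁) z).comp Q) -
        ((fderiv ℝ (fun x => F x z) x₂).comp (D₂.comp C) + (fderiv ℝ (F x₂) z).comp Q)‖ ≤
      (LFxx * c * R + LFxz * cω) * S + LFx * c * T := by
  have hLFxx0 : 0 ≤ LFxx :=
    (norm_nonneg (fderiv ℝ (fun x' => fderiv ℝ (fun x'' => F x'' z) x') x₁)).trans (hLFxx x₁ hx₁)
  have hLFxz0 : 0 ≤ LFxz :=
    (norm_nonneg (fderiv ℝ (fun z' => fderiv ℝ (fun x' => F x' z') x₁) z)).trans (hLFxz x₁ hx₁)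
  have hxx := (hW.norm_partial_fst_sub_le hF hLFxx hx₁ hx₂).trans
    (mul_le_mul_of_nonneg_left hS hLFxx0)
  have hxz := (hW.norm_partial_snd_sub_le hF hLFxz hx₁ hx₂).trans
    (mul_le_mul_of_nonneg_left hS hLFxz0)
  have hLFx0 : 0 ≤ LFx := (norm_nonneg _).trans hLFx
  have hR0 : 0 ≤ R := (norm_nonneg _).trans hD₂
  have hS0 : 0 ≤ S := (norm_nonneg _).trans hS
  have hT0 : 0 ≤ T := (norm_nonneg _).trans hT
  calc _ ≤ LFx * T * c + LFxx * S * R * c + LFxz * S * cω :=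
        (norm_comp_add_comp_sub_le _ _ _ _ _ _ _ _).trans (by gcongr)
    _ = _ := by ring

end Partials

theorem iSup_norm_comp₂_sub_le {M M' : Type*} [Nonempty M] [TopologicalSpace M']
    [CompactSpace M'] {F : E → G → H} {W : Set E} (hW : Convex ℝ W) {ψ : M → M'}
    {f₁ f₂ : M' → E} {ω : M → G} (hf₁ : Continuous f₁) (hf₂ : Continuous f₂)
    (hf₁W : ∀ y, f₁ y ∈ W) (hf₂W : ∀ y, f₂ y ∈ W)
    (hF : ∀ x ∈ W, ∀ m, DifferentiableAt ℝ (uncurry F) (x, ω m)) {LFx : ℝ}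
    (hLFx : ∀ x ∈ W, ∀ m, ‖fderiv ℝ (fun x' => F x' (ω m)) x‖ ≤ LFx) :
    ⨆ m, ‖F (f₁ (ψ m)) (ω m) - F (f₂ (ψ m)) (ω m)‖ ≤ LFx * ⨆ y, ‖f₁ y - f₂ y‖ := by
  have hbdd : BddAbove (range fun y => ‖f₁ y - f₂ y‖) :=
    (isCompact_range (hf₁.sub hf₂).norm).bddAbove
  refine ciSup_le fun m => ?_
  have hLFx0 : 0 ≤ LFx := (norm_nonneg _).trans (hLFx _ (hf₁W (ψ m)) m)
  calc _ ≤ LFx * ‖f₁ (ψ m) - f₂ (ψ m)‖ :=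
        hW.norm_sub_le_of_norm_partial_fst_le (fun x hx => hF x hx m) (fun x hx => hLFx x hx m)
          (hf₁W _) (hf₂W _)
    _ ≤ LFx * ⨆ y, ‖f₁ y - f₂ y‖ := by gcongr; exact le_ciSup hbdd (ψ m)

section Manifold

variable {E₀ H₀ : Type*} [NormedAddCommGroup E₀] [NormedSpace ℝ E₀] [TopologicalSpace H₀]
  {I : ModelWithCorners ℝ E₀ H₀} {M : Type*} [TopologicalSpace M] [ChartedSpace H₀ M]
  {E₁ H₁ : Type*} [NormedAddCommGroup E₁] [NormedSpace ℝ E₁] [TopologicalSpace H₁]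
  {I' : ModelWithCorners ℝ E₁ H₁} {M' : Type*} [TopologicalSpace M'] [ChartedSpace H₁ M']

theorem HasMFDerivAt.prodMk_space_s15 {f : M → E} {g : M → G} {m : M}
    {f' : TangentSpace I m →L[ℝ] E} {g' : TangentSpace I m →L[ℝ] G}
    (hf : HasMFDerivAt I 𝓘(ℝ, E) f m f') (hg : HasMFDerivAt I 𝓘(ℝ, G) g m g') :
    HasMFDerivAt I 𝓘(ℝ, E × G) (fun y => (f y, g y)) m (f'.prod g') :=
  ⟨hf.1.prodMk hg.1, hf.2.prodMk hg.2⟩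

theorem HasMFDerivAt.comp₂ {F : E → G → H} {f : M → E} {g : M → G} {m : M}
    {f' : TangentSpace I m →L[ℝ] E} {g' : TangentSpace I m →L[ℝ] G}
    (hf : HasMFDerivAt I 𝓘(ℝ, E) f m f') (hg : HasMFDerivAt I 𝓘(ℝ, G) g m g')
    (hF : DifferentiableAt ℝ (uncurry F) (f m, g m)) :
    HasMFDerivAt I 𝓘(ℝ, H) (fun y => F (f y) (g y)) m
      ((fderiv ℝ (fun x => F x (g m)) (f m)).comp f' + (fderiv ℝ (F (f m)) (g m)).comp g') := by
  refine (hF.hasFDerivAt.hasMFDerivAt.comp m (hf.prodMk_space_s15 hg)).congr_mfderiv ?_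
  have h := (fderiv ℝ (uncurry F) (f m, g m)).comp_prod_eq_add f' g'
  rwa [← fderiv_partial_fst hF, ← fderiv_partial_snd hF] at h

-- `TangentSpace` carries no norm instance, so manifold derivatives are normed in the model spaces.
theorem iSup_norm_mfderiv_comp₂_sub_le [Nonempty M] [CompactSpace M']
    {F : E → G → H} {W : Set E} (hW : Convex ℝ W) {ψ : M → M'} {f₁ f₂ : M' → E} {ω : M → G}
    (hψ : MDifferentiable I I' ψ) (hf₁ : MDifferentiable I' 𝓘(ℝ, E) f₁)
    (hf₂ : MDifferentiable I' 𝓘(ℝ, E) f₂) (hω : MDifferentiable I 𝓘(ℝ, G) ω)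
    (hf₁W : ∀ y, f₁ y ∈ W) (hf₂W : ∀ y, f₂ y ∈ W)
    (hF : ∀ x ∈ W, ∀ m, ContDiffAt ℝ 2 (uncurry F) (x, ω m)) {LFx LFxx LFxz c R cω : ℝ}
    (hLFx : ∀ x ∈ W, ∀ m, ‖fderiv ℝ (fun x' => F x' (ω m)) x‖ ≤ LFx)
    (hLFxx : ∀ x ∈ W, ∀ m, ‖fderiv ℝ (fun x' => fderiv ℝ (fun x'' => F x'' (ω m)) x') x‖ ≤ LFxx)
    (hLFxz : ∀ x ∈ W, ∀ m, ‖fderiv ℝ (fun z' => fderiv ℝ (fun x' => F x' z') x) (ω m)‖ ≤ LFxz)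
    (hψc : ∀ m, @Norm.norm (E₀ →L[ℝ] E₁) _ (mfderiv I I' ψ m) ≤ c)
    (hf₁R : ∀ y, @Norm.norm (E₁ →L[ℝ] E) _ (mfderiv I' 𝓘(ℝ, E) f₁ y) ≤ R)
    (hf₂R : ∀ y, @Norm.norm (E₁ →L[ℝ] E) _ (mfderiv I' 𝓘(ℝ, E) f₂ y) ≤ R)
    (hωc : ∀ m, @Norm.norm (E₀ →L[ℝ] G) _ (mfderiv I 𝓘(ℝ, G) ω m) ≤ cω) :
    ⨆ m, @Norm.norm (E₀ →L[ℝ] H) _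
        (mfderiv I 𝓘(ℝ, H) (fun m' => F (f₁ (ψ m')) (ω m') - F (f₂ (ψ m')) (ω m')) m) ≤
      (LFxx * c * R + LFxz * cω) * (⨆ y, ‖f₁ y - f₂ y‖) + LFx * c *
        ⨆ y, @Norm.norm (E₁ →L[ℝ] E) _ (mfderiv I' 𝓘(ℝ, E) (fun y' => f₁ y' - f₂ y') y) := by
  have hΔ (y : M') : HasMFDerivAt I' 𝓘(ℝ, E) (fun y' => f₁ y' - f₂ y') y _ :=
    (hf₁ y).hasMFDerivAt.sub (hf₂ y).hasMFDerivAt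
  have hbdd₀ : BddAbove (range fun y => ‖f₁ y - f₂ y‖) :=
    (isCompact_range (hf₁.continuous.sub hf₂.continuous).norm).bddAbove
  have hbdd₁ : BddAbove (range fun y =>
      @Norm.norm (E₁ →L[ℝ] E) _ (mfderiv I' 𝓘(ℝ, E) (fun y' => f₁ y' - f₂ y') y)) := by
    refine ⟨R + R, forall_mem_range.2 fun y => ?_⟩
    rw [(hΔ y).mfderiv]
    exact (norm_sub_le _ _).trans (add_le_add (hf₁R y) (hf₂R y))
  refine ciSup_le fun m => ?_
  have hΨ (f : M' → E) (hf : MDifferentiable I' 𝓘(ℝ, E) f) (hfW : ∀ y, f y ∈ W) :=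
    ((hf (ψ m)).hasMFDerivAt.comp m (hψ m).hasMFDerivAt).comp₂ (hω m).hasMFDerivAt
      ((hF _ (hfW (ψ m)) m).differentiableAt (by simp))
  have hΨ₁₂ : HasMFDerivAt I 𝓘(ℝ, H)
      (fun m' => F (f₁ (ψ m')) (ω m') - F (f₂ (ψ m')) (ω m')) m _ :=
    (hΨ f₁ hf₁ hf₁W).sub (hΨ f₂ hf₂ hf₂W)
  have hT := le_ciSup hbdd₁ (ψ m)
  rw [(hΔ (ψ m)).mfderiv] at hT
  rw [hΨ₁₂.mfderiv]
  exact hW.norm_partials_comp_sub_le (X := E₀) (V := E₁) (fun x hx => hF x hx m) (hf₁W _)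
    (hf₂W _) (hLFx _ (hf₁W _) m) (fun x hx => hLFxx x hx m) (fun x hx => hLFxz x hx m) (hψc m)
    (hf₂R _) (hωc m) (le_ciSup hbdd₀ (ψ m)) hT

theorem iSup_add_mul_iSup_norm_mfderiv_comp₂_sub_le [Nonempty M] [CompactSpace M']
    {F : E → G → H} {W : Set E} (hW : Convex ℝ W) {ψ : M → M'} {f₁ f₂ : M' → E} {ω : M → G}
    (hψ : MDifferentiable I I' ψ) (hf₁ : MDifferentiable I' 𝓘(ℝ, E) f₁)
    (hf₂ : MDifferentiable I' 𝓘(ℝ, E) f₂) (hω : MDifferentiable I 𝓘(ℝ, G) ω)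
    (hf₁W : ∀ y, f₁ y ∈ W) (hf₂W : ∀ y, f₂ y ∈ W)
    (hF : ∀ x ∈ W, ∀ m, ContDiffAt ℝ 2 (uncurry F) (x, ω m)) {LFx LFxx LFxz c R cω δ : ℝ}
    (hLFx : ∀ x ∈ W, ∀ m, ‖fderiv ℝ (fun x' => F x' (ω m)) x‖ ≤ LFx)
    (hLFxx : ∀ x ∈ W, ∀ m, ‖fderiv ℝ (fun x' => fderiv ℝ (fun x'' => F x'' (ω m)) x') x‖ ≤ LFxx)
    (hLFxz : ∀ x ∈ W, ∀ m, ‖fderiv ℝ (fun z' => fderiv ℝ (fun x' => F x' z') x) (ω m)‖ ≤ LFxz)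
    (hψc : ∀ m, @Norm.norm (E₀ →L[ℝ] E₁) _ (mfderiv I I' ψ m) ≤ c)
    (hf₁R : ∀ y, @Norm.norm (E₁ →L[ℝ] E) _ (mfderiv I' 𝓘(ℝ, E) f₁ y) ≤ R)
    (hf₂R : ∀ y, @Norm.norm (E₁ →L[ℝ] E) _ (mfderiv I' 𝓘(ℝ, E) f₂ y) ≤ R)
    (hωc : ∀ m, @Norm.norm (E₀ →L[ℝ] G) _ (mfderiv I 𝓘(ℝ, G) ω m) ≤ cω) (hδ : 0 ≤ δ) :
    (⨆ m, ‖F (f₁ (ψ m)) (ω m) - F (f₂ (ψ m)) (ω m)‖) + δ * ⨆ m, @Norm.norm (E₀ →L[ℝ] H) _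
        (mfderiv I 𝓘(ℝ, H) (fun m' => F (f₁ (ψ m')) (ω m') - F (f₂ (ψ m')) (ω m')) m) ≤
      (LFx + δ * (LFxx * c * R + LFxz * cω)) * (⨆ y, ‖f₁ y - f₂ y‖) + δ * LFx * c *
        ⨆ y, @Norm.norm (E₁ →L[ℝ] E) _ (mfderiv I' 𝓘(ℝ, E) (fun y' => f₁ y' - f₂ y') y) := by
  have h₀ := iSup_norm_comp₂_sub_le (ψ := ψ) hW hf₁.continuous hf₂.continuous hf₁W hf₂W
    (fun x hx m => (hF x hx m).differentiableAt (by simp)) hLFx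
  have h₁ := iSup_norm_mfderiv_comp₂_sub_le hW hψ hf₁ hf₂ hω hf₁W hf₂W hF hLFx hLFxx hLFxz
    hψc hf₁R hf₂R hωc
  nlinarith [mul_le_mul_of_nonneg_left h₁ hδ]

end Manifold

end

theorem exists_pos_contraction_weight {a b K : ℝ} (ha : a < 1) (hb : b < 1) :
    ∃ δ > 0, ∃ c, 0 < c ∧ c < 1 ∧
      ∀ S T : ℝ, 0 ≤ S → 0 ≤ T → (a + δ * K) * S + δ * b * T ≤ c * (S + δ * T) := by
  have hlim : Tendsto (fun δ => a + δ * K) (𝓝[>] 0) (𝓝 (a + 0 * K)) :=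
    ((continuous_const.add (continuous_id.mul continuous_const)).tendsto 0).mono_left
      nhdsWithin_le_nhds
  obtain ⟨δ, hδK, hδ⟩ :=
    ((hlim.eventually (gt_mem_nhds (by simpa using ha))).and self_mem_nhdsWithin).exists
  set c := max (max (a + δ * K) b) (1 / 2)
  refine ⟨δ, hδ, c, by positivity, max_lt (max_lt hδK hb) (by norm_num), fun S T hS hT => ?_⟩
  have hac : a + δ * K ≤ c := (le_max_left _ _).trans (le_max_left _ _)
  have hbc : b ≤ c := (le_max_right _ _).trans (le_max_left _ _)
  nlinarith [mul_le_mul_of_nonneg_right hac hS,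
    mul_le_mul_of_nonneg_right hbc (mul_nonneg hδ.le hT)]

theorem stmt15_general {q N d : ℕ} {M : Type*} [TopologicalSpace M]
    [ChartedSpace (EuclideanSpace ℝ (Fin q)) M]
    [CompactSpace M] [Nonempty M]
    (φ : M ≃ₜ M)
    (hφinv : ContMDiff (𝓡 q) (𝓡 q) 1 φ.symm)
    (ω : M → EuclideanSpace ℝ (Fin d))
    (hω : ContMDiff (𝓡 q) (𝓘(ℝ, EuclideanSpace ℝ (Fin d))) 1 ω)
    (DN : Set (EuclideanSpace ℝ (Fin N))) (Dd : Set (EuclideanSpace ℝ (Fin d)))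
    (hDN : IsOpen DN) (hDd : IsOpen Dd) (hωDd : ∀ m, ω m ∈ Dd)
    (F : EuclideanSpace ℝ (Fin N) → EuclideanSpace ℝ (Fin d) → EuclideanSpace ℝ (Fin N))
    (hF : ContDiffOn ℝ 2
      (fun p : EuclideanSpace ℝ (Fin N) × EuclideanSpace ℝ (Fin d) => F p.1 p.2) (DN ×ˢ Dd))
    (W : Set (EuclideanSpace ℝ (Fin N))) (hWDN : W ⊆ DN)
    (hWconv : Convex ℝ W)
    (LFx LFxx LFxz nTφinv nDω R : ℝ) (hnTφpos : 0 < nTφinv)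
    (hLFx : ∀ x ∈ W, ∀ m : M, ‖fderiv ℝ (fun x' => F x' (ω m)) x‖ ≤ LFx)
    (hLFxx : ∀ x ∈ W, ∀ m : M,
      ‖fderiv ℝ (fun x' => fderiv ℝ (fun x'' => F x'' (ω m)) x') x‖ ≤ LFxx)
    (hLFxz : ∀ x ∈ W, ∀ m : M,
      ‖fderiv ℝ (fun z' => fderiv ℝ (fun x' => F x' z') x) (ω m)‖ ≤ LFxz)
    (hnTφinv : ∀ m : M, @Norm.norm (EuclideanSpace ℝ (Fin q) →L[ℝ] EuclideanSpace ℝ (Fin q)) _ (mfderiv (𝓡 q) (𝓡 q) φ.symm m) ≤ nTφinv)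
    (hnDω : ∀ m : M, @Norm.norm (EuclideanSpace ℝ (Fin q) →L[ℝ] EuclideanSpace ℝ (Fin d)) _ (mfderiv (𝓡 q) (𝓘(ℝ, EuclideanSpace ℝ (Fin d))) ω m) ≤ nDω) :
    (∀ δ > (0:ℝ), ∀ f₁ f₂ : M → EuclideanSpace ℝ (Fin N),
      ContMDiff (𝓡 q) (𝓘(ℝ, EuclideanSpace ℝ (Fin N))) 1 f₁ →
      ContMDiff (𝓡 q) (𝓘(ℝ, EuclideanSpace ℝ (Fin N))) 1 f₂ →
      (∀ m, f₁ m ∈ W) → (∀ m, f₂ m ∈ W) →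
      (∀ m, @Norm.norm (EuclideanSpace ℝ (Fin q) →L[ℝ] EuclideanSpace ℝ (Fin N)) _ (mfderiv (𝓡 q) (𝓘(ℝ, EuclideanSpace ℝ (Fin N))) f₁ m) ≤ R) →
      (∀ m, @Norm.norm (EuclideanSpace ℝ (Fin q) →L[ℝ] EuclideanSpace ℝ (Fin N)) _ (mfderiv (𝓡 q) (𝓘(ℝ, EuclideanSpace ℝ (Fin N))) f₂ m) ≤ R) →
      (⨆ m : M, ‖F (f₁ (φ.symm m)) (ω m) - F (f₂ (φ.symm m)) (ω m)‖) +
        δ * (⨆ m : M, @Norm.norm (EuclideanSpace ℝ (Fin q) →L[ℝ] EuclideanSpace ℝ (Fin N)) _ (mfderiv (𝓡 q) (𝓘(ℝ, EuclideanSpace ℝ (Fin N)))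
              (fun m' => F (f₁ (φ.symm m')) (ω m') - F (f₂ (φ.symm m')) (ω m')) m)) ≤
        (LFx + δ * (LFxx * nTφinv * R + LFxz * nDω)) * (⨆ m : M, ‖f₁ m - f₂ m‖) +
          δ * LFx * nTφinv *
            ⨆ m : M, @Norm.norm (EuclideanSpace ℝ (Fin q) →L[ℝ] EuclideanSpace ℝ (Fin N)) _ (mfderiv (𝓡 q) (𝓘(ℝ, EuclideanSpace ℝ (Fin N)))
              (fun m' => f₁ m' - f₂ m') m)) ∧
    (LFx < min 1 (1 / nTφinv) →
      ∃ δ₀ > (0:ℝ), ∃ c₀ : ℝ, 0 < c₀ ∧ c₀ < 1 ∧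
        ∀ f₁ f₂ : M → EuclideanSpace ℝ (Fin N),
          ContMDiff (𝓡 q) (𝓘(ℝ, EuclideanSpace ℝ (Fin N))) 1 f₁ →
          ContMDiff (𝓡 q) (𝓘(ℝ, EuclideanSpace ℝ (Fin N))) 1 f₂ →
          (∀ m, f₁ m ∈ W) → (∀ m, f₂ m ∈ W) →
          (∀ m, @Norm.norm (EuclideanSpace ℝ (Fin q) →L[ℝ] EuclideanSpace ℝ (Fin N)) _ (mfderiv (𝓡 q) (𝓘(ℝ, EuclideanSpace ℝ (Fin N))) f₁ m) ≤ R) →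
          (∀ m, @Norm.norm (EuclideanSpace ℝ (Fin q) →L[ℝ] EuclideanSpace ℝ (Fin N)) _ (mfderiv (𝓡 q) (𝓘(ℝ, EuclideanSpace ℝ (Fin N))) f₂ m) ≤ R) →
          (⨆ m : M, ‖F (f₁ (φ.symm m)) (ω m) - F (f₂ (φ.symm m)) (ω m)‖) +
            δ₀ * (⨆ m : M, @Norm.norm (EuclideanSpace ℝ (Fin q) →L[ℝ] EuclideanSpace ℝ (Fin N)) _ (mfderiv (𝓡 q) (𝓘(ℝ, EuclideanSpace ℝ (Fin N)))
                  (fun m' => F (f₁ (φ.symm m')) (ω m') - F (f₂ (φ.symm m')) (ω m')) m)) ≤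
            c₀ * ((⨆ m : M, ‖f₁ m - f₂ m‖) +
              δ₀ * ⨆ m : M, @Norm.norm (EuclideanSpace ℝ (Fin q) →L[ℝ] EuclideanSpace ℝ (Fin N)) _ (mfderiv (𝓡 q) (𝓘(ℝ, EuclideanSpace ℝ (Fin N)))
                (fun m' => f₁ m' - f₂ m') m))) := by
  have hFW : ∀ x ∈ W, ∀ m, ContDiffAt ℝ 2 (uncurry F) (x, ω m) := fun x hx m =>
    hF.contDiffAt ((hDN.prod hDd).mem_nhds ⟨hWDN hx, hωDd m⟩)
  have hC1 := fun δ (hδ : 0 ≤ δ) f₁ f₂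
      (hf₁ : ContMDiff (𝓡 q) (𝓘(ℝ, EuclideanSpace ℝ (Fin N))) 1 f₁)
      (hf₂ : ContMDiff (𝓡 q) (𝓘(ℝ, EuclideanSpace ℝ (Fin N))) 1 f₂) hf₁W hf₂W hf₁R hf₂R =>
    iSup_add_mul_iSup_norm_mfderiv_comp₂_sub_le (R := R) hWconv (hφinv.mdifferentiable one_ne_zero)
      (hf₁.mdifferentiable one_ne_zero) (hf₂.mdifferentiable one_ne_zero)
      (hω.mdifferentiable one_ne_zero) hf₁W hf₂W hFW hLFx hLFxx hLFxz hnTφinv hf₁R hf₂R hnDω hδ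
  refine ⟨fun δ hδ => hC1 δ hδ.le, fun hL => ?_⟩
  obtain ⟨δ₀, hδ₀, c₀, hc₀, hc₀1, hc⟩ := exists_pos_contraction_weight
    (K := LFxx * nTφinv * R + LFxz * nDω) (lt_min_iff.1 hL).1
    ((lt_div_iff₀ hnTφpos).1 (lt_min_iff.1 hL).2)
  refine ⟨δ₀, hδ₀, c₀, hc₀, hc₀1, fun f₁ f₂ hf₁ hf₂ hf₁W hf₂W hf₁R hf₂R => ?_⟩
  refine (hC1 δ₀ hδ₀.le f₁ f₂ hf₁ hf₂ hf₁W hf₂W hf₁R hf₂R).trans ?_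
  rw [mul_assoc δ₀ LFx]
  exact hc _ _ (Real.iSup_nonneg fun _ => norm_nonneg _) (Real.iSup_nonneg fun _ => norm_nonneg _)

/-- the `C¹(δ)` contraction estimate for
`Ψ(f)(m) := F (f (φ⁻¹ m)) (ω m)` on `Ω(R,W)`, and the resulting contraction
property for sufficiently small `δ₀` when `L_{F_x} < min {1, 1/‖Tφ⁻¹‖_∞}`. -/
theorem stmt15 {q N d : ℕ} {M : Type*} [TopologicalSpace M]
    [ChartedSpace (EuclideanSpace ℝ (Fin q)) M] [IsManifold (𝓡 q) (⊤ : ℕ∞) M]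
    [CompactSpace M] [Nonempty M]
    (φ : M ≃ₜ M) (hφ : ContMDiff (𝓡 q) (𝓡 q) 1 φ)
    (hφinv : ContMDiff (𝓡 q) (𝓡 q) 1 φ.symm)
    (ω : M → EuclideanSpace ℝ (Fin d))
    (hω : ContMDiff (𝓡 q) (𝓘(ℝ, EuclideanSpace ℝ (Fin d))) 1 ω)
    (DN : Set (EuclideanSpace ℝ (Fin N))) (Dd : Set (EuclideanSpace ℝ (Fin d)))
    (hDN : IsOpen DN) (hDd : IsOpen Dd) (hωDd : ∀ m, ω m ∈ Dd)
    (F : EuclideanSpace ℝ (Fin N) → EuclideanSpace ℝ (Fin d) → EuclideanSpace ℝ (Fin N))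
    (hF : ContDiffOn ℝ 2
      (fun p : EuclideanSpace ℝ (Fin N) × EuclideanSpace ℝ (Fin d) => F p.1 p.2) (DN ×ˢ Dd))
    (W : Set (EuclideanSpace ℝ (Fin N))) (hWDN : W ⊆ DN) (hWcp : IsCompact W)
    (hWconv : Convex ℝ W)
    (hinv : ∀ x ∈ W, ∀ m : M, F x (ω m) ∈ W)
    (LFx LFxx LFxz nTφinv nDω R : ℝ) (hnTφpos : 0 < nTφinv) (hR : 0 < R)
    (hLFx : ∀ x ∈ W, ∀ m : M, ‖fderiv ℝ (fun x' => F x' (ω m)) x‖ ≤ LFx)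
    (hLFxx : ∀ x ∈ W, ∀ m : M,
      ‖fderiv ℝ (fun x' => fderiv ℝ (fun x'' => F x'' (ω m)) x') x‖ ≤ LFxx)
    (hLFxz : ∀ x ∈ W, ∀ m : M,
      ‖fderiv ℝ (fun z' => fderiv ℝ (fun x' => F x' z') x) (ω m)‖ ≤ LFxz)
    (hnTφinv : ∀ m : M, @Norm.norm (EuclideanSpace ℝ (Fin q) →L[ℝ] EuclideanSpace ℝ (Fin q)) _ (mfderiv (𝓡 q) (𝓡 q) φ.symm m) ≤ nTφinv)
    (hnDω : ∀ m : M, @Norm.norm (EuclideanSpace ℝ (Fin q) →L[ℝ] EuclideanSpace ℝ (Fin d)) _ (mfderiv (𝓡 q) (𝓘(ℝ, EuclideanSpace ℝ (Fin d))) ω m) ≤ nDω) :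
    (∀ δ > (0:ℝ), ∀ f₁ f₂ : M → EuclideanSpace ℝ (Fin N),
      ContMDiff (𝓡 q) (𝓘(ℝ, EuclideanSpace ℝ (Fin N))) 1 f₁ →
      ContMDiff (𝓡 q) (𝓘(ℝ, EuclideanSpace ℝ (Fin N))) 1 f₂ →
      (∀ m, f₁ m ∈ W) → (∀ m, f₂ m ∈ W) →
      (∀ m, @Norm.norm (EuclideanSpace ℝ (Fin q) →L[ℝ] EuclideanSpace ℝ (Fin N)) _ (mfderiv (𝓡 q) (𝓘(ℝ, EuclideanSpace ℝ (Fin N))) f₁ m) ≤ R) →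
      (∀ m, @Norm.norm (EuclideanSpace ℝ (Fin q) →L[ℝ] EuclideanSpace ℝ (Fin N)) _ (mfderiv (𝓡 q) (𝓘(ℝ, EuclideanSpace ℝ (Fin N))) f₂ m) ≤ R) →
      (⨆ m : M, ‖F (f₁ (φ.symm m)) (ω m) - F (f₂ (φ.symm m)) (ω m)‖) +
        δ * (⨆ m : M, @Norm.norm (EuclideanSpace ℝ (Fin q) →L[ℝ] EuclideanSpace ℝ (Fin N)) _ (mfderiv (𝓡 q) (𝓘(ℝ, EuclideanSpace ℝ (Fin N)))
              (fun m' => F (f₁ (φ.symm m')) (ω m') - F (f₂ (φ.symm m')) (ω m')) m)) ≤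
        (LFx + δ * (LFxx * nTφinv * R + LFxz * nDω)) * (⨆ m : M, ‖f₁ m - f₂ m‖) +
          δ * LFx * nTφinv *
            ⨆ m : M, @Norm.norm (EuclideanSpace ℝ (Fin q) →L[ℝ] EuclideanSpace ℝ (Fin N)) _ (mfderiv (𝓡 q) (𝓘(ℝ, EuclideanSpace ℝ (Fin N)))
              (fun m' => f₁ m' - f₂ m') m)) ∧
    (LFx < min 1 (1 / nTφinv) →
      ∃ δ₀ > (0:ℝ), ∃ c₀ : ℝ, 0 < c₀ ∧ c₀ < 1 ∧
        ∀ f₁ f₂ : M → EuclideanSpace ℝ (Fin N),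
          ContMDiff (𝓡 q) (𝓘(ℝ, EuclideanSpace ℝ (Fin N))) 1 f₁ →
          ContMDiff (𝓡 q) (𝓘(ℝ, EuclideanSpace ℝ (Fin N))) 1 f₂ →
          (∀ m, f₁ m ∈ W) → (∀ m, f₂ m ∈ W) →
          (∀ m, @Norm.norm (EuclideanSpace ℝ (Fin q) →L[ℝ] EuclideanSpace ℝ (Fin N)) _ (mfderiv (𝓡 q) (𝓘(ℝ, EuclideanSpace ℝ (Fin N))) f₁ m) ≤ R) →
          (∀ m, @Norm.norm (EuclideanSpace ℝ (Fin q) →L[ℝ] EuclideanSpace ℝ (Fin N)) _ (mfderiv (𝓡 q) (𝓘(ℝ, EuclideanSpace ℝ (Fin N))) f₂ m) ≤ R) →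
          (⨆ m : M, ‖F (f₁ (φ.symm m)) (ω m) - F (f₂ (φ.symm m)) (ω m)‖) +
            δ₀ * (⨆ m : M, @Norm.norm (EuclideanSpace ℝ (Fin q) →L[ℝ] EuclideanSpace ℝ (Fin N)) _ (mfderiv (𝓡 q) (𝓘(ℝ, EuclideanSpace ℝ (Fin N)))
                  (fun m' => F (f₁ (φ.symm m')) (ω m') - F (f₂ (φ.symm m')) (ω m')) m)) ≤
            c₀ * ((⨆ m : M, ‖f₁ m - f₂ m‖) +
              δ₀ * ⨆ m : M, @Norm.norm (EuclideanSpace ℝ (Fin q) →L[ℝ] EuclideanSpace ℝ (Fin N)) _ (mfderiv (𝓡 q) (𝓘(ℝ, EuclideanSpace ℝ (Fin N)))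
                (fun m' => f₁ m' - f₂ m') m))) :=
  stmt15_general φ hφinv ω hω DN Dd hDN hDd hωDd F hF W hWDN hWconv LFx LFxx LFxz nTφinv nDω R
    hnTφpos hLFx hLFxx hLFxz hnTφinv hnDω
end

section
/- Let M be a compact topological space, φ : M → M a homeomorphism, ω : M → ℝ^d continuous. Let A ∈ ℝ^{N×N} with largest singular value σ_max(A) < 1 and C ∈ ℝ^{N×d}, and define the linear state map F(x, z) := Ax + Cz. Then there exists a compact convex set W ⊆ ℝ^N with F(W × ω(M)) ⊆ W, the driven system x_t = F(x_{t−1}, ω(φ^t(m))) has the echo state property, and there is a unique continuous f : M → W with f(m) = A f(φ^{−1}(m)) + C ω(m) for all m ∈ M; explicitly f(m) = Σ_{k≥0} A^k C ω(φ^{−k}(m)). -/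
open Filter Topology

private lemma stmt16_aux_zero {E : Type*} [NormedAddCommGroup E] {r c : ℝ} (hr0 : 0 ≤ r)
    (hr : r < 1) (v : E) (h : ∀ n : ℕ, ‖v‖ ≤ r ^ n * c) : v = 0 := by
  have h0 : Tendsto (fun n : ℕ => r ^ n * c) atTop (𝓝 0) := by
    simpa using (tendsto_pow_atTop_nhds_zero_of_lt_one hr0 hr).mul_const c
  have hv : ‖v‖ ≤ 0 := ge_of_tendsto' h0 h
  simpa using le_antisymm hv (norm_nonneg v)

/-- linear state maps `F(x,z) = Ax + Cz` with `σ_max(A) = ‖A‖ < 1`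
driven by continuous observations of a homeomorphism of a compact space admit a
compact convex invariant set, have the echo state property, and have a unique
continuous generalized synchronization given by the explicit series
`f(m) = Σ_{k≥0} A^k C ω(φ^{−k}(m))`. -/
theorem stmt16 {N d : ℕ} {M : Type*} [TopologicalSpace M] [CompactSpace M] [Nonempty M]
    (φ : M ≃ₜ M) (ω : M → EuclideanSpace ℝ (Fin d)) (hω : Continuous ω)
    (A : EuclideanSpace ℝ (Fin N) →L[ℝ] EuclideanSpace ℝ (Fin N))
    (C : EuclideanSpace ℝ (Fin d) →L[ℝ] EuclideanSpace ℝ (Fin N))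
    (hA : ‖A‖ < 1) :
    ∃ W : Set (EuclideanSpace ℝ (Fin N)), IsCompact W ∧ Convex ℝ W ∧
      (∀ x ∈ W, ∀ m : M, A x + C (ω m) ∈ W) ∧
      (∀ m : M, ∃! x : ℤ → EuclideanSpace ℝ (Fin N),
        (∀ t, x t ∈ W) ∧
        ∀ t : ℤ, x t = A (x (t - 1)) + C (ω ((φ.toEquiv ^ t) m))) ∧
      ∃ f : M → EuclideanSpace ℝ (Fin N),
        Continuous f ∧ (∀ m, f m ∈ W) ∧
        (∀ m, f m = A (f (φ.symm m)) + C (ω m)) ∧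
        (∀ m, f m = ∑' k : ℕ, (A ^ k) (C (ω ((φ.toEquiv ^ (-(k : ℤ))) m)))) ∧
        ∀ g : M → EuclideanSpace ℝ (Fin N),
          Continuous g → (∀ m, g m ∈ W) → (∀ m, g m = A (g (φ.symm m)) + C (ω m)) →
            g = f := by
  have hr0 : (0:ℝ) ≤ ‖A‖ := norm_nonneg A
  -- bound on the input term
  obtain ⟨m₀, -, hm₀⟩ := IsCompact.exists_isMaxOn isCompact_univ Set.univ_nonempty
    (Continuous.continuousOn (by fun_prop : Continuous fun m => ‖C (ω m)‖))
  set R : ℝ := ‖C (ω m₀)‖ with hRdef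
  have hR0 : 0 ≤ R := norm_nonneg _
  have hRb : ∀ m, ‖C (ω m)‖ ≤ R := fun m => hm₀ (Set.mem_univ m)
  have h1r : 0 < 1 - ‖A‖ := by linarith
  set B : ℝ := R / (1 - ‖A‖) with hBdef
  have hB0 : 0 ≤ B := div_nonneg hR0 h1r.le
  have hBR : (1 - ‖A‖) * B = R := by
    rw [hBdef, mul_comm, div_mul_cancel₀ R h1r.ne']
  have hBal : ‖A‖ * B + R ≤ B := by nlinarith
  -- powers of A
  have hpow : ∀ (k : ℕ) (v : EuclideanSpace ℝ (Fin N)), ‖(A ^ k) v‖ ≤ ‖A‖ ^ k * ‖v‖ := by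
    intro k
    induction k with
    | zero =>
      intro v
      rw [pow_zero, pow_zero, one_mul, ContinuousLinearMap.one_apply]
    | succ n ih =>
      intro v
      rw [pow_succ, ContinuousLinearMap.mul_apply]
      calc ‖(A ^ n) (A v)‖ ≤ ‖A‖ ^ n * ‖A v‖ := ih (A v)
        _ ≤ ‖A‖ ^ n * (‖A‖ * ‖v‖) :=
            mul_le_mul_of_nonneg_left (A.le_opNorm v) (pow_nonneg hr0 n)
        _ = ‖A‖ ^ (n + 1) * ‖v‖ := by ring
  have hterm : ∀ (k : ℕ) (m : M), ‖(A ^ k) (C (ω m))‖ ≤ ‖A‖ ^ k * R := fun k m =>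
    (hpow k _).trans (mul_le_mul_of_nonneg_left (hRb m) (pow_nonneg hr0 k))
  have hu : Summable (fun k : ℕ => ‖A‖ ^ k * R) :=
    (summable_geometric_of_lt_one hr0 hA).mul_right R
  have hsum : ∀ ψ : ℕ → M, Summable (fun k => (A ^ k) (C (ω (ψ k)))) := fun ψ =>
    Summable.of_norm (Summable.of_nonneg_of_le (fun k => norm_nonneg _)
      (fun k => hterm k (ψ k)) hu)
  -- the synchronization map
  set f : M → EuclideanSpace ℝ (Fin N) :=
    fun m => ∑' k : ℕ, (A ^ k) (C (ω (φ.symm^[k] m))) with hfdef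
  have hfW : ∀ m, ‖f m‖ ≤ B := by
    intro m
    have h1 : ‖f m‖ ≤ ∑' k : ℕ, ‖(A ^ k) (C (ω (φ.symm^[k] m)))‖ :=
      norm_tsum_le_tsum_norm (Summable.of_nonneg_of_le (fun k => norm_nonneg _)
        (fun k => hterm k _) hu)
    have h2 : ∑' k : ℕ, ‖(A ^ k) (C (ω (φ.symm^[k] m)))‖ ≤ ∑' k : ℕ, ‖A‖ ^ k * R :=
      Summable.tsum_le_tsum (fun k => hterm k _)
        (Summable.of_nonneg_of_le (fun k => norm_nonneg _) (fun k => hterm k _) hu) hu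
    have h3 : ∑' k : ℕ, ‖A‖ ^ k * R = B := by
      rw [tsum_mul_right, tsum_geometric_of_lt_one hr0 hA, hBdef]
      rw [div_eq_mul_inv, mul_comm]
    linarith
  -- fixed-point equation
  have hfix : ∀ m, f m = A (f (φ.symm m)) + C (ω m) := by
    intro m
    have hs := hsum (fun k => φ.symm^[k] m)
    have hs' := hsum (fun k => φ.symm^[k] (φ.symm m))
    have hTail : A (f (φ.symm m))
        = ∑' k : ℕ, (A ^ (k + 1)) (C (ω (φ.symm^[k + 1] m))) := by
      rw [hfdef]
      rw [ContinuousLinearMap.map_tsum A hs']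
      refine tsum_congr fun k => ?_
      rw [pow_succ', ContinuousLinearMap.mul_apply, Function.iterate_succ_apply]
    calc f m = (A ^ 0) (C (ω (φ.symm^[0] m)))
          + ∑' k : ℕ, (A ^ (k + 1)) (C (ω (φ.symm^[k + 1] m))) := Summable.tsum_eq_zero_add hs
      _ = A (f (φ.symm m)) + C (ω m) := by rw [← hTail]; simp [add_comm]
  -- zpow vs iterate
  have hinv : ∀ m : M, (φ.toEquiv)⁻¹ m = φ.symm m := fun m => rfl
  have hiter : ∀ (k : ℕ) (m : M), (φ.toEquiv ^ (-(k : ℤ))) m = φ.symm^[k] m := by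
    intro k
    induction k with
    | zero => intro m; simp
    | succ n ih =>
      intro m
      have h1 : (φ.toEquiv ^ (-((n : ℤ) + 1))) = φ.toEquiv ^ (-(n : ℤ)) * (φ.toEquiv)⁻¹ := by
        group
      have h2 : (-((n + 1 : ℕ) : ℤ)) = -((n : ℤ) + 1) := by push_cast; ring
      rw [h2, h1, Equiv.Perm.mul_apply, hinv, ih (φ.symm m), ← Function.iterate_succ_apply]
  have hseries : ∀ m, f m = ∑' k : ℕ, (A ^ k) (C (ω ((φ.toEquiv ^ (-(k : ℤ))) m))) := by
    intro m
    exact (tsum_congr fun k => by rw [hiter k m]).symm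
  -- continuity
  have hfc : Continuous f := by
    refine continuous_tsum (fun k => ?_) hu (fun k m => hterm k _)
    exact (A ^ k).continuous.comp (C.continuous.comp (hω.comp (φ.symm.continuous.iterate k)))
  have key2 : ∀ (t : ℤ) (m : M), φ.symm ((φ.toEquiv ^ t) m) = (φ.toEquiv ^ (t - 1)) m := by
    intro t m
    have h1 : φ.toEquiv ^ (t - 1) = (φ.toEquiv)⁻¹ * φ.toEquiv ^ t := by group
    rw [h1, Equiv.Perm.mul_apply, hinv]
  refine ⟨Metric.closedBall 0 B, isCompact_closedBall 0 B, convex_closedBall 0 B, ?_, ?_, ?_⟩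
  · -- invariance
    intro x hx m
    rw [Metric.mem_closedBall, dist_zero_right] at hx ⊢
    calc ‖A x + C (ω m)‖ ≤ ‖A x‖ + ‖C (ω m)‖ := norm_add_le _ _
      _ ≤ ‖A‖ * B + R := add_le_add
          ((A.le_opNorm x).trans (mul_le_mul_of_nonneg_left hx hr0)) (hRb m)
      _ ≤ B := hBal
  · -- echo state property
    intro m
    refine ⟨fun t => f ((φ.toEquiv ^ t) m), ⟨fun t => by
        simpa [Metric.mem_closedBall, dist_zero_right] using hfW _, fun t => ?_⟩, ?_⟩
    · show f ((φ.toEquiv ^ t) m) = A (f ((φ.toEquiv ^ (t - 1)) m)) + C (ω ((φ.toEquiv ^ t) m))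
      rw [hfix ((φ.toEquiv ^ t) m), key2 t m]
    · rintro y ⟨hyW, hyrec⟩
      have hyB : ∀ t, ‖y t‖ ≤ B := fun t => by
        simpa [Metric.mem_closedBall, dist_zero_right] using hyW t
      have hxrec : ∀ t : ℤ, f ((φ.toEquiv ^ t) m)
          = A (f ((φ.toEquiv ^ (t - 1)) m)) + C (ω ((φ.toEquiv ^ t) m)) := fun t => by
        rw [hfix ((φ.toEquiv ^ t) m), key2 t m]
      funext t
      show y t = f ((φ.toEquiv ^ t) m)
      have hdiff : ∀ n : ℕ, y t - f ((φ.toEquiv ^ t) m)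
          = (A ^ n) (y (t - n) - f ((φ.toEquiv ^ (t - n)) m)) := by
        intro n
        induction n with
        | zero => simp
        | succ n ih =>
          have hind : t - ((n : ℤ) + 1) = t - (n : ℤ) - 1 := by ring
          have e : y (t - n) - f ((φ.toEquiv ^ (t - (n : ℤ))) m)
              = A (y (t - (n : ℤ) - 1) - f ((φ.toEquiv ^ (t - (n : ℤ) - 1)) m)) := by
            rw [hyrec (t - n), hxrec (t - n), map_sub]; abel
          calc y t - f ((φ.toEquiv ^ t) m)
              = (A ^ n) (y (t - n) - f ((φ.toEquiv ^ (t - (n : ℤ))) m)) := ih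
            _ = (A ^ n) (A (y (t - (n : ℤ) - 1) - f ((φ.toEquiv ^ (t - (n : ℤ) - 1)) m))) := by
                rw [e]
            _ = (A ^ (n + 1)) (y (t - ((n : ℕ) + 1 : ℕ)) - f ((φ.toEquiv ^ (t - ((n : ℕ) + 1 : ℕ))) m)) := by
                rw [pow_succ, ContinuousLinearMap.mul_apply]
                push_cast
                rw [hind]
      have hb : ∀ n : ℕ, ‖y t - f ((φ.toEquiv ^ t) m)‖ ≤ ‖A‖ ^ n * (B + B) := by
        intro n
        rw [hdiff n]
        refine (hpow n _).trans (mul_le_mul_of_nonneg_left ?_ (pow_nonneg hr0 n))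
        exact (norm_sub_le _ _).trans (add_le_add (hyB _) (hfW _))
      have := stmt16_aux_zero hr0 hA _ hb
      exact sub_eq_zero.mp this
  · -- the synchronization
    refine ⟨f, hfc, fun m => by
        simpa [Metric.mem_closedBall, dist_zero_right] using hfW m, hfix, hseries, ?_⟩
    intro g hgc hgW hgfix
    have hgB : ∀ m, ‖g m‖ ≤ B := fun m => by
      simpa [Metric.mem_closedBall, dist_zero_right] using hgW m
    funext m
    have hdiff : ∀ (n : ℕ) (m : M), g m - f m = (A ^ n) (g (φ.symm^[n] m) - f (φ.symm^[n] m)) := by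
      intro n
      induction n with
      | zero => intro m; simp
      | succ n ih =>
        intro m
        have e : g m - f m = A (g (φ.symm m) - f (φ.symm m)) := by
          rw [hgfix m, hfix m, map_sub]; abel
        calc g m - f m = A (g (φ.symm m) - f (φ.symm m)) := e
          _ = A ((A ^ n) (g (φ.symm^[n] (φ.symm m)) - f (φ.symm^[n] (φ.symm m)))) := by
              rw [← ih (φ.symm m)]
          _ = (A ^ (n + 1)) (g (φ.symm^[n + 1] m) - f (φ.symm^[n + 1] m)) := by
              rw [pow_succ', ContinuousLinearMap.mul_apply, Function.iterate_succ_apply]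
    have hb : ∀ n : ℕ, ‖g m - f m‖ ≤ ‖A‖ ^ n * (B + B) := by
      intro n
      rw [hdiff n m]
      refine (hpow n _).trans (mul_le_mul_of_nonneg_left ?_ (pow_nonneg hr0 n))
      exact (norm_sub_le _ _).trans (add_le_add (hgB _) (hfW _))
    exact sub_eq_zero.mp (stmt16_aux_zero hr0 hA _ hb)
end

section
/- Let D_d ⊆ ℝ^d and W ⊆ ℝ^N be compact, F : W × D_d → W continuous and a uniform contraction in the state variable with constant 0 < c < 1, and let U^F : D_d^{ℤ₋} → W^{ℤ₋} be the associated filter. Then U^F has the input-forgetting property: for any input z ∈ D_d^{ℤ₋}, any initial state x₀ ∈ W, and the forward iterates x_t := F(x_{t−1}, z_t) started at any time −T with x_{−T} := x₀, one has ‖x_0 − U^F(z)_0‖ ≤ c^T · diam(W); in particular the iterates converge to the unique solution as T → ∞, uniformly over initial conditions in W. -/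
/-- input-forgetting property: for a contracting state map, the
forward iterates started at time `−T` from any initial state `x₀ ∈ W` approach
the unique solution `u = U^F(z)` with error at time `0` bounded by
`c^T · diam W`. -/
theorem stmt18 {N d : ℕ}
    (F : EuclideanSpace ℝ (Fin N) → EuclideanSpace ℝ (Fin d) → EuclideanSpace ℝ (Fin N))
    (W : Set (EuclideanSpace ℝ (Fin N))) (Dd : Set (EuclideanSpace ℝ (Fin d)))
    (hF : Continuous fun p : EuclideanSpace ℝ (Fin N) × EuclideanSpace ℝ (Fin d) => F p.1 p.2)
    (hW : IsCompact W) (hDd : IsCompact Dd)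
    (hinv : ∀ x ∈ W, ∀ z ∈ Dd, F x z ∈ W)
    (c : ℝ) (hc0 : 0 < c) (hc1 : c < 1)
    (hcontr : ∀ x₁ ∈ W, ∀ x₂ ∈ W, ∀ z ∈ Dd, ‖F x₁ z - F x₂ z‖ ≤ c * ‖x₁ - x₂‖)
    (z : ℤ → EuclideanSpace ℝ (Fin d)) (hz : ∀ t : ℤ, t ≤ 0 → z t ∈ Dd)
    (u : ℤ → EuclideanSpace ℝ (Fin N))
    (hu : (∀ t : ℤ, t ≤ 0 → u t ∈ W) ∧ ∀ t : ℤ, t ≤ 0 → u t = F (u (t - 1)) (z t))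
    (T : ℕ) (x₀ : EuclideanSpace ℝ (Fin N)) (hx₀ : x₀ ∈ W)
    (x : ℤ → EuclideanSpace ℝ (Fin N)) (hxinit : x (-(T : ℤ)) = x₀)
    (hxrec : ∀ t : ℤ, -(T : ℤ) < t → t ≤ 0 → x t = F (x (t - 1)) (z t)) :
    ‖x 0 - u 0‖ ≤ c ^ T * Metric.diam W := by
  obtain ⟨huW, hurec⟩ := hu
  have key : ∀ k : ℕ, k ≤ T →
      x (-(T : ℤ) + k) ∈ W ∧
      ‖x (-(T : ℤ) + k) - u (-(T : ℤ) + k)‖ ≤ c ^ k * Metric.diam W := by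
    intro k
    induction k with
    | zero =>
      intro _
      simp only [Nat.cast_zero, add_zero, pow_zero, one_mul]
      rw [hxinit]
      refine ⟨hx₀, ?_⟩
      rw [← dist_eq_norm]
      exact Metric.dist_le_diam_of_mem hW.isBounded hx₀
        (huW _ (by simp [neg_nonpos]))
    | succ k ih =>
      intro hk
      have hk' : k ≤ T := Nat.le_of_succ_le hk
      obtain ⟨hxW, hb⟩ := ih hk'
      set t : ℤ := -(T : ℤ) + (k + 1 : ℕ) with ht
      have ht0 : t ≤ 0 := by
        have : ((k + 1 : ℕ) : ℤ) ≤ (T : ℤ) := by exact_mod_cast hk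
        omega
      have htgt : -(T : ℤ) < t := by
        have : (0 : ℤ) < ((k + 1 : ℕ) : ℤ) := by positivity
        omega
      have ht1 : t - 1 = -(T : ℤ) + k := by push_cast [ht]; ring
      have hzt : z t ∈ Dd := hz t ht0
      have hut1 : u (t - 1) ∈ W := huW _ (by omega)
      have hxt : x t = F (x (t - 1)) (z t) := hxrec t htgt ht0
      have hut : u t = F (u (t - 1)) (z t) := hurec t ht0
      rw [ht1] at hxt hut hut1
      constructor
      · rw [hxt]; exact hinv _ hxW _ hzt
      · rw [hxt, hut]
        calc ‖F (x (-(T : ℤ) + k)) (z t) - F (u (-(T : ℤ) + k)) (z t)‖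
            ≤ c * ‖x (-(T : ℤ) + k) - u (-(T : ℤ) + k)‖ :=
              hcontr _ hxW _ hut1 _ hzt
          _ ≤ c * (c ^ k * Metric.diam W) :=
              mul_le_mul_of_nonneg_left hb hc0.le
          _ = c ^ (k + 1) * Metric.diam W := by ring
  have := (key T le_rfl).2
  simpa using this
end
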